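/- arXiv:1309.3796 — 3 statements merged into one kernel-verified Lean document; each statement's English description precedes it below -/
import Mathlib

section
/- Let A be a unital ring, e ∈ A an idempotent, and M a right A-module. If Me is a simple right eAe-module and Me generates M as an A-module, then M has a unique maximal proper submodule, hence a unique simple quotient. -/
/-!
STATEMENT 4: Let `A` be a unital ring, `e` an idempotent, and `M` a right `A`-module.
If `Me` is a simple right `eAe`-module and `Me` generates `M` as an `A`-module, then `M`
has a unique maximal proper submodule (hence a unique simple quotient).
Right modules over `A` are formalized as left modules over `Aᵐᵒᵖ`.
-/

open MulOpposite


universe u v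

variable {A : Type u} [Ring A]

private lemma eMulMul {e x : A} (he : e * e = e) (hx : e * x * e = x) : e * x = x := by
  conv_lhs => rw [← hx]
  rw [← mul_assoc, ← mul_assoc, he]
  exact hx

private lemma mulMulE {e x : A} (he : e * e = e) (hx : e * x * e = x) : x * e = x := by
  conv_lhs => rw [← hx]
  rw [mul_assoc, he]
  exact hx

/-- The corner `eAe` of a ring `A` at an idempotent `e`, realized as the
nonunital subring of elements `x` with `e * x * e = x`. -/
def cornerSubring (e : A) (he : e * e = e) : NonUnitalSubring A where
  carrier := {x | e * x * e = x}
  add_mem' := by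
    intro a b ha hb
    show e * (a + b) * e = a + b
    rw [mul_add, add_mul, ha, hb]
  zero_mem' := by show e * 0 * e = 0; simp
  neg_mem' := by
    intro a ha
    show e * (-a) * e = -a
    rw [mul_neg, neg_mul, ha]
  mul_mem' := by
    intro a b ha hb
    show e * (a * b) * e = a * b
    have ha' : e * a = a := eMulMul he ha
    have hb' : b * e = b := mulMulE he hb
    rw [← mul_assoc e a b, ha', mul_assoc, hb']

instance cornerOne (e : A) (he : e * e = e) : One (cornerSubring e he) :=
  ⟨⟨e, show e * e * e = e by rw [he, he]⟩⟩

/-- `eAe` is a unital ring with unit `e`. -/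
instance cornerRing (e : A) (he : e * e = e) : Ring (cornerSubring e he) :=
  { (inferInstanceAs (NonUnitalRing (cornerSubring e he)) : NonUnitalRing (cornerSubring e he)), cornerOne e he with
    one_mul := fun x => Subtype.ext (eMulMul he x.2)
    mul_one := fun x => Subtype.ext (mulMulE he x.2) }

/-- For a right `A`-module `M` (a left `Aᵐᵒᵖ`-module), the subset `Me`,
realized as the additive subgroup of elements fixed by the right action of `e`. -/
def cornerSet (e : A) (M : Type v) [AddCommGroup M] [Module Aᵐᵒᵖ M] : AddSubgroup M where
  carrier := {m | op e • m = m}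
  add_mem' := by
    intro a b ha hb
    show op e • (a + b) = a + b
    rw [smul_add]
    simp only [Set.mem_setOf_eq] at ha hb
    rw [ha, hb]
  zero_mem' := smul_zero _
  neg_mem' := by
    intro a ha
    show op e • (-a) = -a
    simp only [Set.mem_setOf_eq] at ha
    rw [smul_neg, ha]

instance cornerSetSMul (e : A) (he : e * e = e) (M : Type v) [AddCommGroup M]
    [Module Aᵐᵒᵖ M] : SMul (cornerSubring e he)ᵐᵒᵖ (cornerSet e M) :=
  ⟨fun r m => ⟨op (r.unop : A) • (m : M), by
    show op e • (op (r.unop : A) • (m : M)) = op (r.unop : A) • (m : M)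
    rw [← mul_smul, ← op_mul, mulMulE he r.unop.2]⟩⟩

/-- `Me` is a right module over the corner ring `eAe`. -/
instance cornerSetModule (e : A) (he : e * e = e) (M : Type v) [AddCommGroup M]
    [Module Aᵐᵒᵖ M] : Module (cornerSubring e he)ᵐᵒᵖ (cornerSet e M) where
  smul := (· • ·)
  one_smul m := Subtype.ext (show op e • (m : M) = m from m.2)
  mul_smul r s m := Subtype.ext <| by
    show op (((r * s).unop : A)) • (m : M) = op ((r.unop : A)) • (op ((s.unop : A)) • (m : M))
    have h : (((r * s).unop : A)) = ((s.unop : A)) * ((r.unop : A)) := rfl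
    rw [h, op_mul, mul_smul]
  smul_zero r := Subtype.ext (smul_zero _)
  smul_add r m m' := Subtype.ext (smul_add _ _ _)
  add_smul r s m := Subtype.ext <| by
    show op (((r + s).unop : A)) • (m : M)
        = op ((r.unop : A)) • (m : M) + op ((s.unop : A)) • (m : M)
    have h : (((r + s).unop : A)) = ((r.unop : A)) + ((s.unop : A)) := rfl
    rw [h, MulOpposite.op_add, add_smul]
  zero_smul m := Subtype.ext <| by
    show op (((0 : (cornerSubring e he)ᵐᵒᵖ).unop : A)) • (m : M) = 0
    simp


/-!
Let `N = {m ∈ M | m A e = 0}`. For a proper submodule `N'`, the trace `N' ∩ Me` is an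
`eAe`-submodule of the simple module `Me`; it cannot be all of `Me`, since `Me` generates `M`,
so it is zero. As `m a e ∈ N' ∩ Me` for every `m ∈ N'`, this gives `N' ≤ N`. Finally `N` is
proper because it meets `Me ≠ 0` trivially (take `a = 1`).
-/

section Corner

variable {e : A} {M : Type v} [AddCommGroup M] [Module Aᵐᵒᵖ M]

variable (e M) in
def cornerAnnihilator : Submodule Aᵐᵒᵖ M where
  carrier := {m | ∀ a : A, op e • op a • m = 0}
  add_mem' hx hy a := by rw [smul_add, smul_add, hx a, hy a, add_zero]
  zero_mem' _ := by simp only [smul_zero]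
  smul_mem' r m hm a := by
    rw [← mul_smul (op a), ← op_unop r, ← op_mul]
    exact hm _

theorem eq_zero_of_mem_cornerSet_of_mem_cornerAnnihilator {m : M} (hm : m ∈ cornerSet e M)
    (hm' : m ∈ cornerAnnihilator e M) : m = 0 := by
  simpa only [op_one, one_smul, show op e • m = m from hm] using hm' 1

theorem le_cornerAnnihilator (he : e * e = e) {N : Submodule Aᵐᵒᵖ M}
    (hN : ∀ m ∈ N, m ∈ cornerSet e M → m = 0) : N ≤ cornerAnnihilator e M := by
  intro m hm a
  refine hN _ (N.smul_mem _ (N.smul_mem _ hm)) ?_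
  show op e • op e • op a • m = op e • op a • m
  rw [← mul_smul, ← op_mul, he]

def cornerTrace (he : e * e = e) (N : Submodule Aᵐᵒᵖ M) :
    Submodule (cornerSubring e he)ᵐᵒᵖ (cornerSet e M) where
  carrier := {m | (m : M) ∈ N}
  add_mem' := N.add_mem
  zero_mem' := N.zero_mem
  smul_mem' r _ hm := N.smul_mem (op (r.unop : A)) hm

theorem eq_top_of_cornerTrace_eq_top (he : e * e = e)
    (hgen : Submodule.span Aᵐᵒᵖ (cornerSet e M : Set M) = ⊤) {N : Submodule Aᵐᵒᵖ M}
    (hN : cornerTrace he N = ⊤) : N = ⊤ := by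
  rw [eq_top_iff, ← hgen, Submodule.span_le]
  intro m hm
  exact (hN ▸ Submodule.mem_top : (⟨m, hm⟩ : cornerSet e M) ∈ cornerTrace he N)

theorem le_cornerAnnihilator_of_ne_top (he : e * e = e)
    (hsimple : IsSimpleModule (cornerSubring e he)ᵐᵒᵖ (cornerSet e M))
    (hgen : Submodule.span Aᵐᵒᵖ (cornerSet e M : Set M) = ⊤) {N : Submodule Aᵐᵒᵖ M}
    (hN : N ≠ ⊤) : N ≤ cornerAnnihilator e M := by
  have htrace : cornerTrace he N = ⊥ :=
    (hsimple.eq_bot_or_eq_top _).resolve_right (mt (eq_top_of_cornerTrace_eq_top he hgen) hN)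
  refine le_cornerAnnihilator he fun m hm hme => ?_
  have : (⟨m, hme⟩ : cornerSet e M) ∈ cornerTrace he N := hm
  rw [htrace, Submodule.mem_bot] at this
  exact congrArg Subtype.val this

theorem cornerAnnihilator_ne_top (he : e * e = e)
    (hsimple : IsSimpleModule (cornerSubring e he)ᵐᵒᵖ (cornerSet e M)) :
    cornerAnnihilator e M ≠ ⊤ := by
  have := IsSimpleModule.nontrivial (cornerSubring e he)ᵐᵒᵖ (cornerSet e M)
  obtain ⟨m, hm⟩ := exists_ne (0 : cornerSet e M)
  intro htop
  exact hm <| Subtype.ext <|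
    eq_zero_of_mem_cornerSet_of_mem_cornerAnnihilator m.2 (htop ▸ Submodule.mem_top)

end Corner

theorem unique_maximal_submodule_of_corner_simple (e : A) (he : e * e = e)
    (M : Type u) [AddCommGroup M] [Module Aᵐᵒᵖ M]
    (hsimple : IsSimpleModule (cornerSubring e he)ᵐᵒᵖ (cornerSet e M))
    (hgen : Submodule.span Aᵐᵒᵖ ((cornerSet e M : Set M)) = ⊤) :
    ∃! N : Submodule Aᵐᵒᵖ M, N ≠ ⊤ ∧ ∀ N' : Submodule Aᵐᵒᵖ M, N' ≠ ⊤ → N' ≤ N := by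
  have hle : ∀ N' : Submodule Aᵐᵒᵖ M, N' ≠ ⊤ → N' ≤ cornerAnnihilator e M :=
    fun _ => le_cornerAnnihilator_of_ne_top he hsimple hgen
  have hne := cornerAnnihilator_ne_top he hsimple
  exact ⟨cornerAnnihilator e M, ⟨hne, hle⟩,
    fun N ⟨hN, hNmax⟩ => le_antisymm (hle N hN) (hNmax _ hne)⟩
end

section
/- Let A be a ring and S_1, …, S_n right A-modules with the following property: for each i there is a short exact sequence 0 → K_i → P_i → S_i → 0 with P_i projective and with K_i admitting a finite filtration whose successive quotients are each isomorphic to some S_j with j > i. Then every S_i has finite projective dimension. -/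
/-!
Measure projective dimension by the vanishing of `Ext` in the category of modules. Modules of
projective dimension `< m` are then closed under extensions, so the filtration of `K i` bounds its
projective dimension by those of the `S j` with `j > i`, and `0 → K i → P i → S i → 0` raises the
bound by one: descending induction on `i`. Dimension shifting along `0 → ker f → P → M → 0`
turns an `Ext`-bound into a bound in the sense of `ProjDimLE`.
-/

universe u v

/-- `ProjDimLE R n M` says that the `R`-module `M` has projective dimension at most `n`. -/
def ProjDimLE (R : Type u) [Ring R] : (n : ℕ) → (M : Type v) → [AddCommGroup M] → [Module R M] → Prop
  | 0, M, _, _ => Module.Projective R M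
  | n + 1, M, _, _ =>
    ∀ (P : Type v) (_ : AddCommGroup P) (_ : Module R P), Module.Projective R P →
      ∀ f : P →ₗ[R] M, Function.Surjective f → ProjDimLE R n (LinearMap.ker f)

open CategoryTheory

/-- Passing to `Type (max u v)` makes `R` small, which is what identifies the projective objects
of `ModuleCat` with the projective modules. -/
abbrev HasProjDimLT (R : Type u) [Ring R] (M : Type v) [AddCommGroup M] [Module R M] (n : ℕ) :
    Prop :=
  HasProjectiveDimensionLT (ModuleCat.of R (ULift.{u} M)) n

section HasProjDimLT

variable {R : Type u} [Ring R] {M N L : Type v} [AddCommGroup M] [Module R M]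
  [AddCommGroup N] [Module R N] [AddCommGroup L] [Module R L] {n : ℕ}

theorem HasProjDimLT.of_linearEquiv (h : HasProjDimLT R M n) (e : M ≃ₗ[R] N) :
    HasProjDimLT R N n :=
  hasProjectiveDimensionLT_of_iso
    (ULift.moduleEquiv.trans (e.trans ULift.moduleEquiv.symm)).toModuleIso n

theorem HasProjDimLT.mono (h : HasProjDimLT R M n) {m : ℕ} (hnm : n ≤ m) :
    HasProjDimLT R M m :=
  hasProjectiveDimensionLT_of_ge _ n m hnm

theorem hasProjDimLT_of_subsingleton [Subsingleton M] (n : ℕ) : HasProjDimLT R M n :=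
  HasProjDimLT.mono (ModuleCat.isZero_of_subsingleton _).hasProjectiveDimensionLT_zero n.zero_le

theorem hasProjDimLT_one_of_projective [Module.Projective R M] : HasProjDimLT R M 1 :=
  have : Module.Projective R (ULift.{u} M) := .of_equiv ULift.moduleEquiv.symm
  inferInstance

theorem Module.Projective.of_hasProjDimLT_one (h : HasProjDimLT R M 1) : Module.Projective R M :=
  have : Module.Projective R (ULift.{u} M) :=
    ModuleCat.projective_of_module_projective (ModuleCat.of R (ULift.{u} M))
  .of_ulift

namespace Function.Exact

variable {f : M →ₗ[R] N} {g : N →ₗ[R] L}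

theorem shortExact_uLift (hfg : Function.Exact f g) (hf : Function.Injective f)
    (hg : Function.Surjective g) :
    (ModuleCat.shortComplexOfConj ULift.moduleEquiv.{u} ULift.moduleEquiv.{u}
      ULift.moduleEquiv.{u} f g hfg.linearMap_comp_eq_zero).ShortExact :=
  ModuleCat.shortComplexOfConj_shortExact _ _ _ f g hfg hf hg

theorem hasProjDimLT_middle (hfg : Function.Exact f g) (hf : Function.Injective f)
    (hg : Function.Surjective g) (hM : HasProjDimLT R M n) (hL : HasProjDimLT R L n) :
    HasProjDimLT R N n :=
  (hfg.shortExact_uLift hf hg).hasProjectiveDimensionLT_X₂ n hM hL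

theorem hasProjDimLT_right (hfg : Function.Exact f g) (hf : Function.Injective f)
    (hg : Function.Surjective g) (hM : HasProjDimLT R M n) (hN : HasProjDimLT R N (n + 1)) :
    HasProjDimLT R L (n + 1) :=
  (hfg.shortExact_uLift hf hg).hasProjectiveDimensionLT_X₃ n hM hN

theorem hasProjDimLT_left (hfg : Function.Exact f g) (hf : Function.Injective f)
    (hg : Function.Surjective g) (hN : HasProjDimLT R N n) (hL : HasProjDimLT R L (n + 1)) :
    HasProjDimLT R M n :=
  (hfg.shortExact_uLift hf hg).hasProjectiveDimensionLT_X₁ n hN hL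

end Function.Exact

theorem Submodule.hasProjDimLT_of_quotient (K : Submodule R M) (hK : HasProjDimLT R K n)
    (hQ : HasProjDimLT R (M ⧸ K) n) : HasProjDimLT R M n :=
  (LinearMap.exact_subtype_mkQ K).hasProjDimLT_middle K.injective_subtype K.mkQ_surjective hK hQ

theorem hasProjDimLT_of_filtration {r : ℕ} (F : Fin (r + 1) → Submodule R M) (h0 : F 0 = ⊥)
    (hlast : F (Fin.last r) = ⊤) (hmono : ∀ t : Fin r, F t.castSucc ≤ F t.succ)
    (hquot : ∀ t : Fin r,
      HasProjDimLT R ((F t.succ) ⧸ (F t.castSucc).comap (F t.succ).subtype) n) :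
    HasProjDimLT R M n := by
  have hF : ∀ t, HasProjDimLT R (F t) n := by
    intro t
    induction t using Fin.induction with
    | zero => rw [h0]; exact hasProjDimLT_of_subsingleton n
    | succ t ih =>
      refine Submodule.hasProjDimLT_of_quotient _ ?_ (hquot t)
      exact ih.of_linearEquiv (Submodule.comapSubtypeEquivOfLe (hmono t)).symm
  have hM := hF (Fin.last r)
  rw [hlast] at hM
  exact hM.of_linearEquiv Submodule.topEquiv

theorem hasProjDimLT_succ_of_surjective {P : Type v} [AddCommGroup P] [Module R P]
    [Module.Projective R P] {p : P →ₗ[R] M} (hp : Function.Surjective p)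
    (hK : HasProjDimLT R (LinearMap.ker p) n) : HasProjDimLT R M (n + 1) :=
  (LinearMap.exact_subtype_ker_map p).hasProjDimLT_right (LinearMap.ker p).injective_subtype hp hK
    (hasProjDimLT_one_of_projective.mono n.succ_pos)

theorem projDimLE_of_hasProjDimLT {d : ℕ} (h : HasProjDimLT R M (d + 1)) : ProjDimLE R d M := by
  induction d generalizing M with
  | zero => exact Module.Projective.of_hasProjDimLT_one h
  | succ d ih =>
    intro P _ _ hP p hp
    exact ih ((LinearMap.exact_subtype_ker_map p).hasProjDimLT_left
      (LinearMap.ker p).injective_subtype hp (hasProjDimLT_one_of_projective.mono d.succ_pos) h)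

end HasProjDimLT

theorem finite_projDim_of_stratification
    (R : Type u) [Ring R] (n : ℕ)
    (S : Fin n → Type v) [∀ i, AddCommGroup (S i)] [∀ i, Module R (S i)]
    (P : Fin n → Type v) [∀ i, AddCommGroup (P i)] [∀ i, Module R (P i)]
    (hP : ∀ i, Module.Projective R (P i))
    (p : ∀ i, P i →ₗ[R] S i) (hp : ∀ i, Function.Surjective (p i))
    (hfilt : ∀ i : Fin n, ∃ (r : ℕ) (F : Fin (r + 1) → Submodule R (LinearMap.ker (p i))),
      F 0 = ⊥ ∧ F (Fin.last r) = ⊤ ∧ (∀ t : Fin r, F t.castSucc ≤ F t.succ) ∧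
        ∀ t : Fin r, ∃ j : Fin n, i < j ∧
          Nonempty (((F t.succ) ⧸ (F t.castSucc).comap (F t.succ).subtype) ≃ₗ[R] S j)) :
    ∀ i, ∃ d : ℕ, ProjDimLE R d (S i) := by
  have key : ∀ i, ∃ d, HasProjDimLT R (S i) d := by
    intro i
    induction i using WellFoundedGT.induction with
    | _ i ih =>
      obtain ⟨r, F, h0, hlast, hmono, hquot⟩ := hfilt i
      choose j hij e using hquot
      choose d hd using fun t => ih (j t) (hij t)
      let D := Finset.univ.sup d
      have hK : HasProjDimLT R (LinearMap.ker (p i)) D :=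
        hasProjDimLT_of_filtration F h0 hlast hmono fun t =>
          ((hd t).mono (Finset.le_sup (Finset.mem_univ t))).of_linearEquiv (e t).some.symm
      have := hP i
      exact ⟨D + 1, hasProjDimLT_succ_of_surjective (hp i) hK⟩
  exact fun i => (key i).imp fun d hd => projDimLE_of_hasProjDimLT (hd.mono d.le_succ)
end

section
/- Let R = k[x_1,…,x_n] over a commutative ring k, let s_i denote the algebra automorphism swapping x_i and x_{i+1}, and define the Demazure operator ∂_i(f) = (f − s_i f)/(x_i − x_{i+1}). Then ∂_i is a well-defined k-linear endomorphism of R and the following hold: (1) ∂_i² = 0; (2) ∂_i ∂_j = ∂_j ∂_i whenever |i − j| > 1; (3) ∂_i ∂_{i+1} ∂_i = ∂_{i+1} ∂_i ∂_{i+1}; (4) ∂_i(x_i · f) − x_{i+1} · ∂_i(f) = f for all f. -/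
/-!
Multiplication by `X p - X q` is injective, and `X p - X q` divides `f - s f` for the transposition
`s` of `p` and `q`. Hence the Demazure operator exists, is unique and is linear, and identities
between Demazure operators may be checked after multiplying by differences of variables. There
both sides become explicit signed sums of permuted copies of `f`: `f - s f - s' f + s' s f` for
disjoint transpositions `s`, `s'`, and the alternating sum over the permutations of `{p, q, r}` for
the braid relation, which is symmetric in the two operators because `s s' s = s' s s'`.
-/

open MvPolynomial

namespace MvPolynomial

variable {σ R : Type*} [CommRing R]

theorem rename_perm_rename_perm (e e' : Equiv.Perm σ) (f : MvPolynomial σ R) :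
    rename e (rename e' f) = rename ⇑(e * e') f := by
  rw [rename_rename, Equiv.Perm.coe_mul]

variable [DecidableEq σ]

theorem isRegular_X_sub_X {p q : σ} (hpq : p ≠ q) : IsRegular (X p - X q : MvPolynomial σ R) := by
  -- `x_q ↦ x_p - x_q` is an involutive substitution carrying the regular `X q` to `X p - X q`
  let φ : MvPolynomial σ R →ₐ[R] MvPolynomial σ R := aeval (Function.update X q (X p - X q))
  have hφ : φ.comp φ = AlgHom.id R _ := algHom_ext fun r => by
    rcases eq_or_ne r q with rfl | hr <;> simp [φ, *]
  let e := AlgEquiv.ofAlgHom φ φ hφ hφ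
  have he : e (X q) = X p - X q := by simp [e, φ]
  rw [isRegular_iff_mem_nonZeroDivisors, ← he, ← MulEquivClass.map_nonZeroDivisors e]
  exact Submonoid.mem_map_of_mem _ isRegular_X.mem_nonZeroDivisors

theorem X_sub_X_dvd_sub_rename_swap (p q : σ) (f : MvPolynomial σ R) :
    X p - X q ∣ f - rename (Equiv.swap p q) f := by
  -- modulo `X p - X q` the two variables agree, so the swap acts trivially
  let π := Ideal.Quotient.mkₐ R (Ideal.span {(X p - X q : MvPolynomial σ R)})
  have hπ : π.comp (rename (Equiv.swap p q)) = π := algHom_ext fun r => by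
    have hX : π (X p) = π (X q) := Ideal.Quotient.eq.mpr (Ideal.mem_span_singleton_self _)
    rcases eq_or_ne r p with rfl | hrp
    · simp [hX]
    rcases eq_or_ne r q with rfl | hrq
    · simp [hX]
    · simp [Equiv.swap_apply_of_ne_of_ne hrp hrq]
  rw [← Ideal.mem_span_singleton, ← Ideal.Quotient.eq]
  exact (DFunLike.congr_fun hπ f).symm

theorem rename_swap_braid {p q r : σ} (hpq : p ≠ q) (hqr : q ≠ r) (hpr : p ≠ r)
    (f : MvPolynomial σ R) :
    rename (Equiv.swap p q) (rename (Equiv.swap q r) (rename (Equiv.swap p q) f)) =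
      rename (Equiv.swap q r) (rename (Equiv.swap p q) (rename (Equiv.swap q r) f)) := by
  have hrp : Equiv.swap p q r = r := Equiv.swap_apply_of_ne_of_ne hpr.symm hqr.symm
  have hpr' : Equiv.swap q r p = p := Equiv.swap_apply_of_ne_of_ne hpq hpr
  have hperm : Equiv.swap p q * (Equiv.swap q r * Equiv.swap p q) =
      Equiv.swap q r * (Equiv.swap p q * Equiv.swap q r) :=
    calc _ = Equiv.swap (Equiv.swap p q q) (Equiv.swap p q r) := by
          rw [Equiv.swap_apply_apply, Equiv.swap_inv, mul_assoc]
      _ = Equiv.swap (Equiv.swap q r p) (Equiv.swap q r q) := by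
          rw [Equiv.swap_apply_right, Equiv.swap_apply_left, hrp, hpr']
      _ = _ := by rw [Equiv.swap_apply_apply, Equiv.swap_inv, mul_assoc]
  simp only [rename_perm_rename_perm, hperm]

theorem X_sub_X_mul_left_cancel {p q : σ} (hpq : p ≠ q) {f g : MvPolynomial σ R}
    (h : (X p - X q) * f = (X p - X q) * g) : f = g :=
  (isRegular_X_sub_X hpq).left h

def IsDemazureOperator (p q : σ) (D : MvPolynomial σ R →ₗ[R] MvPolynomial σ R) : Prop :=
  ∀ f, (X p - X q) * D f = f - rename (Equiv.swap p q) f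

theorem existsUnique_isDemazureOperator {p q : σ} (hpq : p ≠ q) :
    ∃! D : MvPolynomial σ R →ₗ[R] MvPolynomial σ R, IsDemazureOperator p q D := by
  choose d hd using fun f : MvPolynomial σ R => X_sub_X_dvd_sub_rename_swap p q f
  let D : MvPolynomial σ R →ₗ[R] MvPolynomial σ R :=
    { toFun := d
      map_add' := fun f g => X_sub_X_mul_left_cancel hpq <| by
        simp only [mul_add, ← hd, map_add]
        ring
      map_smul' := fun a f => X_sub_X_mul_left_cancel hpq <| by
        simp only [RingHom.id_apply, mul_smul_comm, ← hd, map_smul, smul_sub] }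
  refine ⟨D, fun f => (hd f).symm, fun D' hD' => LinearMap.ext fun f => ?_⟩
  exact X_sub_X_mul_left_cancel hpq ((hD' f).trans (hd f))

namespace IsDemazureOperator

variable {p q : σ} {D : MvPolynomial σ R →ₗ[R] MvPolynomial σ R}

theorem neg (hD : IsDemazureOperator p q D) : IsDemazureOperator q p (-D) := fun f => by
  rw [LinearMap.neg_apply, Equiv.swap_comm, ← hD f]
  ring

theorem rename_swap_apply (hD : IsDemazureOperator p q D) (hpq : p ≠ q) (f : MvPolynomial σ R) :
    rename (Equiv.swap p q) (D f) = D f := by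
  apply X_sub_X_mul_left_cancel hpq
  have h := congrArg (rename (Equiv.swap p q)) (hD f)
  simp only [map_mul, map_sub, rename_X, Equiv.swap_apply_left, Equiv.swap_apply_right,
    rename_perm_rename_perm, Equiv.swap_mul_self, Equiv.Perm.coe_one, rename_id,
    AlgHom.id_apply] at h
  linear_combination -h - hD f

theorem apply_apply (hD : IsDemazureOperator p q D) (hpq : p ≠ q) (f : MvPolynomial σ R) :
    D (D f) = 0 := by
  apply X_sub_X_mul_left_cancel hpq
  simp only [hD (D f), hD.rename_swap_apply hpq, sub_self, mul_zero]

theorem apply_X_mul (hD : IsDemazureOperator p q D) (hpq : p ≠ q) (f : MvPolynomial σ R) :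
    D (X p * f) - X q * D f = f := by
  apply X_sub_X_mul_left_cancel hpq
  have h := hD (X p * f)
  simp only [map_mul, rename_X, Equiv.swap_apply_left] at h
  linear_combination h - X q * hD f

theorem rename_apply_eq_apply_rename (hD : IsDemazureOperator p q D) (hpq : p ≠ q)
    {e : Equiv.Perm σ} (hp : e p = p) (hq : e q = q) (f : MvPolynomial σ R) :
    rename e (D f) = D (rename e f) := by
  apply X_sub_X_mul_left_cancel hpq
  have h := congrArg (rename e) (hD f)
  simp only [map_mul, map_sub, rename_X, hp, hq] at h
  have hs : rename e (rename (Equiv.swap p q) f) = rename (Equiv.swap p q) (rename e f) := by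
    rw [rename_perm_rename_perm, rename_perm_rename_perm, Equiv.mul_swap_eq_swap_mul, hp, hq]
  linear_combination h - hD (rename e f) - hs

variable {p' q' : σ} {A : MvPolynomial σ R →ₗ[R] MvPolynomial σ R}

theorem mul_mul_apply_apply_of_ne (hD : IsDemazureOperator p q D)
    (hA : IsDemazureOperator p' q' A) (hp'q' : p' ≠ q')
    (hpp' : p ≠ p') (hpq' : p ≠ q') (hqp' : q ≠ p') (hqq' : q ≠ q') (f : MvPolynomial σ R) :
    (X p' - X q') * ((X p - X q) * D (A f)) =
      f - rename (Equiv.swap p q) f - rename (Equiv.swap p' q') f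
        + rename (Equiv.swap p' q') (rename (Equiv.swap p q) f) := by
  have hAs := hA.rename_apply_eq_apply_rename hp'q' (e := Equiv.swap p q)
    (Equiv.swap_apply_of_ne_of_ne hpp'.symm hqp'.symm)
    (Equiv.swap_apply_of_ne_of_ne hpq'.symm hqq'.symm) f
  rw [hD, hAs]
  linear_combination hA f - hA (rename (Equiv.swap p q) f)

theorem apply_apply_comm (hD : IsDemazureOperator p q D) (hpq : p ≠ q)
    (hA : IsDemazureOperator p' q' A) (hp'q' : p' ≠ q')
    (hpp' : p ≠ p') (hpq' : p ≠ q') (hqp' : q ≠ p') (hqq' : q ≠ q') (f : MvPolynomial σ R) :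
    D (A f) = A (D f) := by
  apply X_sub_X_mul_left_cancel hpq
  apply X_sub_X_mul_left_cancel hp'q'
  have hs : rename (Equiv.swap p' q') (rename (Equiv.swap p q) f) =
      rename (Equiv.swap p q) (rename (Equiv.swap p' q') f) := by
    rw [rename_perm_rename_perm, rename_perm_rename_perm, Equiv.mul_swap_eq_swap_mul,
      Equiv.swap_apply_of_ne_of_ne hpp' hpq', Equiv.swap_apply_of_ne_of_ne hqp' hqq']
  rw [hD.mul_mul_apply_apply_of_ne hA hp'q' hpp' hpq' hqp' hqq', mul_left_comm,
    hA.mul_mul_apply_apply_of_ne hD hpq hpp'.symm hqp'.symm hpq'.symm hqq'.symm]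
  linear_combination hs

theorem mul_mul_mul_apply_apply_apply {r : σ} (hD : IsDemazureOperator p q D)
    (hA : IsDemazureOperator q r A) (hpq : p ≠ q) (hqr : q ≠ r) (hpr : p ≠ r)
    (f : MvPolynomial σ R) :
    (X p - X q) * ((X q - X r) * ((X p - X r) * D (A (D f)))) =
      f - rename (Equiv.swap p q) f - rename (Equiv.swap q r) f
        + rename (Equiv.swap p q) (rename (Equiv.swap q r) f)
        + rename (Equiv.swap q r) (rename (Equiv.swap p q) f)
        - rename (Equiv.swap p q) (rename (Equiv.swap q r) (rename (Equiv.swap p q) f)) := by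
  have hrp : Equiv.swap p q r = r := Equiv.swap_apply_of_ne_of_ne hpr.symm hqr.symm
  have hpr' : Equiv.swap q r p = p := Equiv.swap_apply_of_ne_of_ne hpq hpr
  have e1 := congrArg (rename (Equiv.swap p q)) (hA (D f))
  simp only [map_mul, map_sub, rename_X, Equiv.swap_apply_right, hrp,
    hD.rename_swap_apply hpq] at e1
  have e2 := congrArg (rename (Equiv.swap q r)) (hD f)
  simp only [map_mul, map_sub, rename_X, Equiv.swap_apply_left, hpr'] at e2
  have e3 := congrArg (rename (Equiv.swap p q)) e2
  simp only [map_mul, map_sub, rename_X, Equiv.swap_apply_left, hrp] at e3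
  linear_combination (X q - X r) * (X p - X r) * hD (A (D f)) + (X p - X r) * hA (D f)
    - (X q - X r) * e1 + hD f - e2 + e3

theorem braid {r : σ} (hD : IsDemazureOperator p q D) (hA : IsDemazureOperator q r A)
    (hpq : p ≠ q) (hqr : q ≠ r) (hpr : p ≠ r) (f : MvPolynomial σ R) :
    D (A (D f)) = A (D (A f)) := by
  have hDAD := hD.mul_mul_mul_apply_apply_apply hA hpq hqr hpr f
  -- `-A` and `-D` are Demazure operators for `(r, q)` and `(q, p)`
  have hADA := hA.neg.mul_mul_mul_apply_apply_apply hD.neg hqr.symm hpq.symm hpr.symm f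
  simp only [LinearMap.neg_apply, map_neg, neg_neg, Equiv.swap_comm r q, Equiv.swap_comm q p]
    at hADA
  apply X_sub_X_mul_left_cancel hpq
  apply X_sub_X_mul_left_cancel hqr
  apply X_sub_X_mul_left_cancel hpr
  linear_combination hDAD - hADA - rename_swap_braid hpq hqr hpr f

end IsDemazureOperator

end MvPolynomial

theorem demazure_operators (k : Type*) [CommRing k] (n : ℕ) :
    (∀ (i : ℕ) (hi : i + 1 < n),
        ∃! D : MvPolynomial (Fin n) k →ₗ[k] MvPolynomial (Fin n) k,
          ∀ f : MvPolynomial (Fin n) k,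
            (X (⟨i, by omega⟩ : Fin n) - X (⟨i + 1, hi⟩ : Fin n)) * D f
              = f - rename (⇑(Equiv.swap (⟨i, by omega⟩ : Fin n) (⟨i + 1, hi⟩ : Fin n))) f) ∧
      ∀ D : ∀ (i : ℕ), i + 1 < n → (MvPolynomial (Fin n) k →ₗ[k] MvPolynomial (Fin n) k),
        (∀ (i : ℕ) (hi : i + 1 < n) (f : MvPolynomial (Fin n) k),
            (X (⟨i, by omega⟩ : Fin n) - X (⟨i + 1, hi⟩ : Fin n)) * D i hi f
              = f - rename (⇑(Equiv.swap (⟨i, by omega⟩ : Fin n) (⟨i + 1, hi⟩ : Fin n))) f) →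
          (∀ (i : ℕ) (hi : i + 1 < n) (f : MvPolynomial (Fin n) k),
              D i hi (D i hi f) = 0) ∧
          (∀ (i j : ℕ) (hi : i + 1 < n) (hj : j + 1 < n), (i + 1 < j ∨ j + 1 < i) →
              ∀ f : MvPolynomial (Fin n) k, D i hi (D j hj f) = D j hj (D i hi f)) ∧
          (∀ (i : ℕ) (h2 : i + 2 < n) (f : MvPolynomial (Fin n) k),
              D i (by omega) (D (i + 1) (by omega) (D i (by omega) f))
                = D (i + 1) (by omega) (D i (by omega) (D (i + 1) (by omega) f))) ∧
          (∀ (i : ℕ) (hi : i + 1 < n) (f : MvPolynomial (Fin n) k),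
              D i hi (X (⟨i, by omega⟩ : Fin n) * f)
                  - X (⟨i + 1, hi⟩ : Fin n) * D i hi f = f) := by
  have hne {a b : ℕ} (ha : a < n) (hb : b < n) (hab : a ≠ b) : (⟨a, ha⟩ : Fin n) ≠ ⟨b, hb⟩ :=
    Fin.ne_of_val_ne hab
  refine ⟨fun i hi => existsUnique_isDemazureOperator (hne _ _ (by omega)), fun D hD => ?_⟩
  replace hD : ∀ i (hi : i + 1 < n),
      IsDemazureOperator (⟨i, by omega⟩ : Fin n) ⟨i + 1, hi⟩ (D i hi) := hD
  refine ⟨fun i hi => (hD i hi).apply_apply (hne _ _ (by omega)), ?_, ?_, ?_⟩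
  · intro i j hi hj hij
    exact (hD i hi).apply_apply_comm (hne _ _ (by omega)) (hD j hj) (hne _ _ (by omega))
      (hne _ _ (by omega)) (hne _ _ (by omega)) (hne _ _ (by omega)) (hne _ _ (by omega))
  · intro i h2
    exact (hD i _).braid (hD (i + 1) _)
      (hne _ _ (by omega)) (hne _ _ (by omega)) (hne _ _ (by omega))
  · exact fun i hi => (hD i hi).apply_X_mul (hne _ _ (by omega))
end
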